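/- Let (C, E, s) be an extriangulated category and A →x B →y C --δ--> an E-triangle. Then for any object X, the sequence Hom(C,X) → Hom(B,X) → Hom(A,X) → E(C,X) → E(B,X) → E(A,X) is exact, where the connecting map sends g: A → X to g_*δ. -/

import Mathlib

open CategoryTheory Limits

universe w v u

/-- An extriangulated category structure on an additive category `𝒞`, in the sense of
Nakaoka–Palu: a biadditive `Ab`-valued functor `E` together with an additive realization,
encoded via the predicate `IsTriangle x y δ` meaning that `A ⟶x B ⟶y X` realizes
`δ ∈ E(X,A)`, satisfying (ET1)–(ET4) and their duals. -/
structure ExtriangulatedStructure (𝒞 : Type u) [Category.{v} 𝒞] [Preadditive 𝒞]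
    [HasBinaryBiproducts 𝒞] where
  E : 𝒞 → 𝒞 → AddCommGrpCat.{w}
  pull : ∀ {X' X A : 𝒞}, (X' ⟶ X) → E X A → E X' A
  push : ∀ {X A A' : 𝒞}, (A ⟶ A') → E X A → E X A'
  pull_id : ∀ {X A : 𝒞} (δ : E X A), pull (𝟙 X) δ = δ
  push_id : ∀ {X A : 𝒞} (δ : E X A), push (𝟙 A) δ = δ
  pull_comp : ∀ {X'' X' X A : 𝒞} (c' : X'' ⟶ X') (c : X' ⟶ X) (δ : E X A),
      pull (c' ≫ c) δ = pull c' (pull c δ)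
  push_comp : ∀ {X A A' A'' : 𝒞} (a : A ⟶ A') (a' : A' ⟶ A'') (δ : E X A),
      push (a ≫ a') δ = push a' (push a δ)
  pull_push : ∀ {X' X A A' : 𝒞} (c : X' ⟶ X) (a : A ⟶ A') (δ : E X A),
      pull c (push a δ) = push a (pull c δ)
  pull_add : ∀ {X' X A : 𝒞} (c : X' ⟶ X) (δ δ' : E X A),
      pull c (δ + δ') = pull c δ + pull c δ'
  push_add : ∀ {X A A' : 𝒞} (a : A ⟶ A') (δ δ' : E X A),
      push a (δ + δ') = push a δ + push a δ'
  add_pull : ∀ {X' X A : 𝒞} (c c' : X' ⟶ X) (δ : E X A),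
      pull (c + c') δ = pull c δ + pull c' δ
  add_push : ∀ {X A A' : 𝒞} (a a' : A ⟶ A') (δ : E X A),
      push (a + a') δ = push a δ + push a' δ
  IsTriangle : ∀ {A B X : 𝒞}, (A ⟶ B) → (B ⟶ X) → E X A → Prop
  realize_exists : ∀ {X A : 𝒞} (δ : E X A),
      ∃ (B : 𝒞) (x : A ⟶ B) (y : B ⟶ X), IsTriangle x y δ
  realize_zero : ∀ (A X : 𝒞),
      IsTriangle (biprod.inl : A ⟶ A ⊞ X) (biprod.snd : A ⊞ X ⟶ X) (0 : E X A)
  realize_sum : ∀ {A B X A' B' X' : 𝒞} (x : A ⟶ B) (y : B ⟶ X) (δ : E X A)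
      (x' : A' ⟶ B') (y' : B' ⟶ X') (δ' : E X' A'),
      IsTriangle x y δ → IsTriangle x' y' δ' →
      IsTriangle (biprod.map x x') (biprod.map y y')
        (push biprod.inl (pull biprod.fst δ) + push biprod.inr (pull biprod.snd δ'))
  realize_iso : ∀ {A B B' X : 𝒞} (x : A ⟶ B) (y : B ⟶ X) (δ : E X A) (b : B ≅ B'),
      IsTriangle x y δ → IsTriangle (x ≫ b.hom) (b.inv ≫ y) δ
  realize_mor : ∀ {A B X A' B' X' : 𝒞} {x : A ⟶ B} {y : B ⟶ X} {δ : E X A}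
      {x' : A' ⟶ B'} {y' : B' ⟶ X'} {δ' : E X' A'} (a : A ⟶ A') (c : X ⟶ X'),
      IsTriangle x y δ → IsTriangle x' y' δ' → push a δ = pull c δ' →
      ∃ b : B ⟶ B', x ≫ b = a ≫ x' ∧ y ≫ c = b ≫ y'
  ET3 : ∀ {A B X A' B' X' : 𝒞} {x : A ⟶ B} {y : B ⟶ X} {δ : E X A}
      {x' : A' ⟶ B'} {y' : B' ⟶ X'} {δ' : E X' A'} (a : A ⟶ A') (b : B ⟶ B'),
      IsTriangle x y δ → IsTriangle x' y' δ' → x ≫ b = a ≫ x' →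
      ∃ c : X ⟶ X', push a δ = pull c δ' ∧ y ≫ c = b ≫ y'
  ET3op : ∀ {A B X A' B' X' : 𝒞} {x : A ⟶ B} {y : B ⟶ X} {δ : E X A}
      {x' : A' ⟶ B'} {y' : B' ⟶ X'} {δ' : E X' A'} (b : B ⟶ B') (c : X ⟶ X'),
      IsTriangle x y δ → IsTriangle x' y' δ' → y ≫ c = b ≫ y' →
      ∃ a : A ⟶ A', push a δ = pull c δ' ∧ x ≫ b = a ≫ x'
  ET4 : ∀ {A B D Cv F : 𝒞} (f : A ⟶ B) (f' : B ⟶ D) (δ : E D A)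
      (g : B ⟶ Cv) (g' : Cv ⟶ F) (δ' : E F B),
      IsTriangle f f' δ → IsTriangle g g' δ' →
      ∃ (E₀ : 𝒞) (h : A ⟶ Cv) (h' : Cv ⟶ E₀) (d : D ⟶ E₀) (e : E₀ ⟶ F) (δ'' : E E₀ A),
        IsTriangle h h' δ'' ∧ IsTriangle d e (push f' δ') ∧
        h = f ≫ g ∧ f' ≫ d = g ≫ h' ∧ g' = h' ≫ e ∧
        pull d δ'' = δ ∧ push f δ'' = pull e δ'
  ET4op : ∀ {D B A F Cv : 𝒞} (i : D ⟶ B) (p : B ⟶ A) (δ : E A D)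
      (j : F ⟶ Cv) (q : Cv ⟶ B) (δ' : E B F),
      IsTriangle i p δ → IsTriangle j q δ' →
      ∃ (E₀ : 𝒞) (i' : E₀ ⟶ Cv) (p' : Cv ⟶ A) (m : F ⟶ E₀) (n : E₀ ⟶ D) (δ'' : E A E₀),
        IsTriangle i' p' δ'' ∧ IsTriangle m n (pull i δ') ∧
        p' = q ≫ p ∧ i' ≫ q = n ≫ i ∧ j = m ≫ i' ∧
        push n δ'' = δ ∧ pull p δ'' = push m δ'

namespace ExtriangulatedStructure

variable {𝒞 : Type u} [Category.{v} 𝒞] [Preadditive 𝒞] [HasBinaryBiproducts 𝒞]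
variable (S : ExtriangulatedStructure.{w} 𝒞)

/-- A morphism is an inflation if it occurs as the first map of some `E`-triangle. -/
def IsInflation {A B : 𝒞} (f : A ⟶ B) : Prop :=
  ∃ (X : 𝒞) (g : B ⟶ X) (δ : S.E X A), S.IsTriangle f g δ

/-- A morphism is a deflation if it occurs as the second map of some `E`-triangle. -/
def IsDeflation {B X : 𝒞} (g : B ⟶ X) : Prop :=
  ∃ (A : 𝒞) (f : A ⟶ B) (δ : S.E X A), S.IsTriangle f g δ

/-- Condition (WIC). -/
def WIC : Prop :=
  (∀ {A B X : 𝒞} (f : A ⟶ B) (g : B ⟶ X), S.IsInflation (f ≫ g) → S.IsInflation f) ∧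
  (∀ {A B X : 𝒞} (f : A ⟶ B) (g : B ⟶ X), S.IsDeflation (f ≫ g) → S.IsDeflation g)

/-- `(a, b, c)` is a morphism of `E`-triangles. -/
def IsTriangleMor {A B X A' B' X' : 𝒞} (x : A ⟶ B) (y : B ⟶ X) (δ : S.E X A)
    (x' : A' ⟶ B') (y' : B' ⟶ X') (δ' : S.E X' A')
    (a : A ⟶ A') (b : B ⟶ B') (c : X ⟶ X') : Prop :=
  x ≫ b = a ≫ x' ∧ y ≫ c = b ≫ y' ∧ S.push a δ = S.pull c δ'

/-- A cotorsion pair `(𝒬, ℛ)`: `E(𝒬, ℛ) = 0` and every object admits the two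
approximation `E`-triangles. -/
def CotorsionPair (𝒬 ℛ : Set 𝒞) : Prop :=
  (∀ (Q R : 𝒞), Q ∈ 𝒬 → R ∈ ℛ → ∀ δ : S.E Q R, δ = 0) ∧
  (∀ X : 𝒞, ∃ (R Q : 𝒞) (f : R ⟶ Q) (g : Q ⟶ X) (δ : S.E X R),
      S.IsTriangle f g δ ∧ Q ∈ 𝒬 ∧ R ∈ ℛ) ∧
  (∀ X : 𝒞, ∃ (R Q : 𝒞) (f : X ⟶ R) (g : R ⟶ Q) (δ : S.E Q X),
      S.IsTriangle f g δ ∧ Q ∈ 𝒬 ∧ R ∈ ℛ)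

/-- A cotorsion pair is hereditary if `𝒬` is closed under cocones of deflations and
`ℛ` is closed under cones of inflations. -/
def Hereditary (𝒬 ℛ : Set 𝒞) : Prop :=
  (∀ {A B X : 𝒞} (f : A ⟶ B) (g : B ⟶ X) (δ : S.E X A),
      S.IsTriangle f g δ → B ∈ 𝒬 → X ∈ 𝒬 → A ∈ 𝒬) ∧
  (∀ {A B X : 𝒞} (f : A ⟶ B) (g : B ⟶ X) (δ : S.E X A),
      S.IsTriangle f g δ → A ∈ ℛ → B ∈ ℛ → X ∈ ℛ)

/-- A class of objects is thick: closed under direct summands and satisfying the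
2-out-of-3 property on `E`-triangles. -/
def Thick (𝒲 : Set 𝒞) : Prop :=
  (∀ {X Y : 𝒞}, Y ∈ 𝒲 → (∃ (i : X ⟶ Y) (p : Y ⟶ X), i ≫ p = 𝟙 X) → X ∈ 𝒲) ∧
  (∀ {A B X : 𝒞} (f : A ⟶ B) (g : B ⟶ X) (δ : S.E X A), S.IsTriangle f g δ →
    (A ∈ 𝒲 → B ∈ 𝒲 → X ∈ 𝒲) ∧ (A ∈ 𝒲 → X ∈ 𝒲 → B ∈ 𝒲) ∧ (B ∈ 𝒲 → X ∈ 𝒲 → A ∈ 𝒲))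

/-- `(𝒬, 𝒲, ℛ)` is a Hovey triple. -/
def HoveyTriple (𝒬 𝒲 ℛ : Set 𝒞) : Prop :=
  S.Thick 𝒲 ∧ S.CotorsionPair 𝒬 (𝒲 ∩ ℛ) ∧ S.CotorsionPair (𝒬 ∩ 𝒲) ℛ

end ExtriangulatedStructure

/-!
Exactness at `Hom(B, T)` and `Hom(A, T)` comes from comparing the `E`-triangle `A → B → C`
with a split one `X → X ⊞ Y → Y` realizing `0`, through (ET2) or (ET3). At `E(C, T)`, realize
`ε` as `T → M → C`; if `y^* ε = 0`, the same comparison lifts `y` through `M → C`, and (ET3)ᵒᵖ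
then gives `φ : A → T` with `φ_* δ = ε`. At `E(B, T)`, realize `ε` as `T → M → B` and apply
(ET4)ᵒᵖ to it and `A → B → C`: this produces an `E`-triangle `T → E₀ → A` realizing `x^* ε`,
which splits when `x^* ε = 0`; pushing the new class in `E(C, E₀)` along the retraction
`E₀ → T` gives the preimage of `ε` under `y^*`.
-/

namespace ExtriangulatedStructure

variable {𝒞 : Type u} [Category.{v} 𝒞] [Preadditive 𝒞] [HasBinaryBiproducts 𝒞]
  (S : ExtriangulatedStructure.{w} 𝒞)

@[simp]
lemma push_zero {X A A' : 𝒞} (a : A ⟶ A') : S.push a (0 : S.E X A) = 0 :=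
  (AddMonoidHom.mk' (S.push a) (S.push_add a)).map_zero

@[simp]
lemma pull_zero {X' X A : 𝒞} (c : X' ⟶ X) : S.pull c (0 : S.E X A) = 0 :=
  (AddMonoidHom.mk' (S.pull c) (S.pull_add c)).map_zero

@[simp]
lemma zero_pull {X' X A : 𝒞} (δ : S.E X A) : S.pull (0 : X' ⟶ X) δ = 0 :=
  (AddMonoidHom.mk' (S.pull · δ) (S.add_pull · · δ)).map_zero

namespace IsTriangle

variable {S} {A B C : 𝒞} {x : A ⟶ B} {y : B ⟶ C} {δ : S.E C A}

lemma push_inflation_eq_zero (hT : S.IsTriangle x y δ) : S.push x δ = 0 := by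
  obtain ⟨c, hc, -⟩ := S.ET3 x biprod.inl hT (S.realize_zero B C) rfl
  rw [hc, S.pull_zero]

lemma pull_deflation_eq_zero (hT : S.IsTriangle x y δ) : S.pull y δ = 0 := by
  obtain ⟨a, ha, -⟩ := S.ET3op biprod.snd y (S.realize_zero A B) hT rfl
  rw [← ha, S.push_zero]

lemma inflation_comp_deflation (hT : S.IsTriangle x y δ) : x ≫ y = 0 := by
  obtain ⟨b, hx, hy⟩ := S.realize_mor x (𝟙 C) hT (S.realize_zero B C)
    (by rw [hT.push_inflation_eq_zero, S.pull_id])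
  rw [Category.comp_id] at hy
  rw [hy, ← Category.assoc, hx, Category.assoc, biprod.inl_snd, comp_zero]

lemma exists_lift_of_pull_eq_zero (hT : S.IsTriangle x y δ) {Z : 𝒞} (g : Z ⟶ C)
    (hg : S.pull g δ = 0) : ∃ k : Z ⟶ B, k ≫ y = g := by
  obtain ⟨b, -, hy⟩ := S.realize_mor (𝟙 A) g (S.realize_zero A Z) hT
    (by rw [S.push_id, hg])
  exact ⟨biprod.inr ≫ b, by rw [Category.assoc, ← hy, biprod.inr_snd_assoc]⟩

lemma comp_eq_zero_iff (hT : S.IsTriangle x y δ) {T : 𝒞} (φ : B ⟶ T) :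
    x ≫ φ = 0 ↔ ∃ ψ : C ⟶ T, y ≫ ψ = φ := by
  constructor
  · intro hφ
    obtain ⟨c, -, hy⟩ := S.ET3 x (biprod.lift (𝟙 B) φ) hT (S.realize_zero B T)
      (by ext <;> simp [hφ])
    exact ⟨c, by rw [hy, biprod.lift_snd]⟩
  · rintro ⟨ψ, rfl⟩
    rw [← Category.assoc, hT.inflation_comp_deflation, zero_comp]

lemma push_eq_zero_iff (hT : S.IsTriangle x y δ) {T : 𝒞} (φ : A ⟶ T) :
    S.push φ δ = 0 ↔ ∃ ψ : B ⟶ T, x ≫ ψ = φ := by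
  constructor
  · intro hφ
    obtain ⟨b, hx, -⟩ := S.realize_mor φ (𝟙 C) hT (S.realize_zero T C)
      (by rw [hφ, S.pull_zero])
    exact ⟨b ≫ biprod.fst, by rw [← Category.assoc, hx, Category.assoc, biprod.inl_fst,
      Category.comp_id]⟩
  · rintro ⟨ψ, rfl⟩
    rw [S.push_comp, hT.push_inflation_eq_zero, S.push_zero]

lemma pull_deflation_eq_zero_iff (hT : S.IsTriangle x y δ) {T : 𝒞} (ε : S.E C T) :
    S.pull y ε = 0 ↔ ∃ φ : A ⟶ T, S.push φ δ = ε := by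
  constructor
  · intro hε
    obtain ⟨M, m, e, hM⟩ := S.realize_exists ε
    obtain ⟨k, hk⟩ := hM.exists_lift_of_pull_eq_zero y hε
    obtain ⟨a, ha, -⟩ := S.ET3op k (𝟙 C) hT hM (by rw [Category.comp_id, hk])
    exact ⟨a, by rw [ha, S.pull_id]⟩
  · rintro ⟨φ, rfl⟩
    rw [S.pull_push, hT.pull_deflation_eq_zero, S.push_zero]

lemma pull_inflation_eq_zero_iff (hT : S.IsTriangle x y δ) {T : 𝒞} (ε : S.E B T) :
    S.pull x ε = 0 ↔ ∃ ε' : S.E C T, S.pull y ε' = ε := by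
  constructor
  · intro hε
    obtain ⟨M, m, g, hM⟩ := S.realize_exists ε
    obtain ⟨E₀, _, _, m₀, _, δ'', _, hsplit, _, _, _, _, hδ''⟩ :=
      S.ET4op x y δ m g ε hT hM
    obtain ⟨r, hr⟩ := (hsplit.push_eq_zero_iff (𝟙 T)).mp (by rw [S.push_id, hε])
    exact ⟨S.push r δ'', by rw [S.pull_push, hδ'', ← S.push_comp, hr, S.push_id]⟩
  · rintro ⟨ε', rfl⟩
    rw [← S.pull_comp, hT.inflation_comp_deflation, S.zero_pull]

end IsTriangle

end ExtriangulatedStructure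

open CategoryTheory Limits in
/-- the contravariant long exact sequence associated to an E-triangle. -/
theorem stmt14 {𝒞 : Type u} [Category.{v} 𝒞] [Preadditive 𝒞] [HasBinaryBiproducts 𝒞]
    (S : ExtriangulatedStructure.{w} 𝒞)
    {A B C0 : 𝒞} (x : A ⟶ B) (y : B ⟶ C0) (δ : S.E C0 A)
    (hT : S.IsTriangle x y δ) (T : 𝒞) :
    (∀ φ : B ⟶ T, x ≫ φ = 0 ↔ ∃ ψ : C0 ⟶ T, y ≫ ψ = φ) ∧
    (∀ φ : A ⟶ T, S.push φ δ = 0 ↔ ∃ ψ : B ⟶ T, x ≫ ψ = φ) ∧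
    (∀ ε : S.E C0 T, S.pull y ε = 0 ↔ ∃ φ : A ⟶ T, S.push φ δ = ε) ∧
    (∀ ε : S.E B T, S.pull x ε = 0 ↔ ∃ ε' : S.E C0 T, S.pull y ε' = ε) :=
  ⟨hT.comp_eq_zero_iff, hT.push_eq_zero_iff, hT.pull_deflation_eq_zero_iff,
    hT.pull_inflation_eq_zero_iff⟩
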